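/- arXiv:2310.18032 — 14 statements merged into one kernel-verified Lean document; each statement's English description precedes it below -/
import Mathlib

section
/- Let R be a commutative ring with identity, S a multiplicative subset of R, n a positive integer, I an ideal of R with I ∩ S = ∅, and J an ideal of R with J ∩ S ≠ ∅. If I is an S-n-absorbing ideal of R, then the product ideal I·J is an S-n-absorbing ideal of R. -/
/-- `I` is `S`-`n`-absorbing with associated element `s`: whenever a product of `n+1`
elements lies in `I`, multiplying the product with one factor omitted by `s` lands in `I`. -/
def IsSNAbsorbingAssoc {R : Type*} [CommRing R] (s : R) (n : ℕ) (I : Ideal R) : Prop :=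
  ∀ r : Fin (n + 1) → R, (∏ i, r i) ∈ I →
    ∃ j : Fin (n + 1), s * ∏ i ∈ Finset.univ.erase j, r i ∈ I

/-- `I` is an `S`-`n`-absorbing ideal. -/
def IsSNAbsorbing {R : Type*} [CommRing R] (S : Set R) (n : ℕ) (I : Ideal R) : Prop :=
  ∃ s ∈ S, IsSNAbsorbingAssoc s n I


theorem IsSNAbsorbingAssoc.mul_ideal {R : Type*} [CommRing R] {s t : R} {n : ℕ}
    {I J : Ideal R} (hs : IsSNAbsorbingAssoc s n I) (ht : t ∈ J) :
    IsSNAbsorbingAssoc (s * t) n (I * J) := by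
  intro r hr
  obtain ⟨j, hj⟩ := hs r (Ideal.mul_le_left hr)
  exact ⟨j, mul_right_comm s t _ ▸ Ideal.mul_mem_mul hj ht⟩

theorem stmt_0_general {R : Type*} [CommRing R] (S : Submonoid R) (n : ℕ)
    (I J : Ideal R)
    (hJS : ((J : Set R) ∩ (S : Set R)).Nonempty)
    (hI : IsSNAbsorbing (S : Set R) n I) :
    IsSNAbsorbing (S : Set R) n (I * J) := by
  obtain ⟨s, hsS, hs⟩ := hI
  obtain ⟨t, htJ, htS⟩ := hJS
  exact ⟨s * t, mul_mem hsS htS, hs.mul_ideal htJ⟩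

theorem stmt_0 {R : Type*} [CommRing R] (S : Submonoid R) (n : ℕ) (hn : 0 < n)
    (I J : Ideal R) (hIS : Disjoint (I : Set R) (S : Set R))
    (hJS : ((J : Set R) ∩ (S : Set R)).Nonempty)
    (hI : IsSNAbsorbing (S : Set R) n I) :
    IsSNAbsorbing (S : Set R) n (I * J) :=
  stmt_0_general S n I J hJS hI
end

section
/- Let T be a commutative ring with identity, R a subring of T, S a multiplicative subset of R (hence of T), n a positive integer, and J an ideal of T with J ∩ S = ∅. If J is an S-n-absorbing ideal of T, then J ∩ R is an S-n-absorbing ideal of R. -/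
theorem stmt_1 {T : Type*} [CommRing T] (R : Subring T) (S : Submonoid R)
    (n : ℕ) (hn : 0 < n) (J : Ideal T)
    (hJS : Disjoint (J : Set T) ((S.map R.subtype.toMonoidHom : Submonoid T) : Set T))
    (hJ : IsSNAbsorbing ((S.map R.subtype.toMonoidHom : Submonoid T) : Set T) n J) :
    IsSNAbsorbing (S : Set R) n (J.comap R.subtype) := by
  obtain ⟨s, hs, habs⟩ := hJ
  obtain ⟨s', hs', rfl⟩ := hs
  refine ⟨s', hs', fun r hr => ?_⟩
  have hr' : (∏ i, (R.subtype (r i) : T)) ∈ J := by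
    rw [← map_prod]; exact hr
  obtain ⟨j, hj⟩ := habs (fun i => R.subtype (r i)) hr'
  refine ⟨j, ?_⟩
  simp only [Ideal.mem_comap, map_mul, map_prod]
  exact hj
end

section
/- Let R be a commutative ring with identity, let S_1 and S_2 be multiplicative subsets of R, let n_1, n_2 be positive integers, and for k = 1, 2 let I_k be an ideal of R with I_k ∩ S_k = ∅. Let S = S_1·S_2 = {s_1 s_2 | s_1 ∈ S_1, s_2 ∈ S_2} and assume (I_1 ∩ I_2) ∩ S = ∅. If I_1 is an S_1-n_1-absorbing ideal of R and I_2 is an S_2-n_2-absorbing ideal of R, then I_1 ∩ I_2 is an S-(n_1 + n_2)-absorbing ideal of R. -/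
lemma aux_erase_eq_map_succAbove {n : ℕ} (j : Fin (n+1)) :
    (Finset.univ.erase j : Finset (Fin (n+1))) = Finset.univ.map (Fin.succAboveEmb j) := by
  ext x
  simp only [Finset.mem_erase, Finset.mem_univ, and_true, Finset.mem_map,
    Fin.succAboveEmb_apply, ← Fin.exists_succAbove_eq_iff, true_and]

lemma aux_prod_erase_succAbove {M : Type*} [CommMonoid M] {n : ℕ} (g : Fin (n+1) → M)
    (j : Fin (n+1)) :
    ∏ i ∈ Finset.univ.erase j, g i = ∏ i : Fin n, g (j.succAbove i) := by
  rw [aux_erase_eq_map_succAbove, Finset.prod_map]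
  rfl

lemma aux_erase_castSucc_eq {n : ℕ} (k : Fin n) :
    (Finset.univ.erase (Fin.castSucc k) : Finset (Fin (n+1))) =
      insert (Fin.last n) ((Finset.univ.erase k).map (Fin.succAboveEmb (Fin.last n))) := by
  ext x
  cases x using Fin.lastCases with
  | last => simp [(Fin.castSucc_lt_last k).ne']
  | cast i =>
      simp [Fin.succAbove_last, Fin.castSucc_inj, (Fin.castSucc_lt_last i).ne, eq_comm]

lemma aux_prod_erase_castSucc_snoc {M : Type*} [CommMonoid M] {n : ℕ} (u : Fin n → M) (b : M)
    (k : Fin n) :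
    ∏ i ∈ Finset.univ.erase (Fin.castSucc k), (Fin.snoc u b : Fin (n+1) → M) i =
      b * ∏ i ∈ Finset.univ.erase k, u i := by
  rw [aux_erase_castSucc_eq, Finset.prod_insert (by
      simp only [Finset.mem_map]
      rintro ⟨x, -, hx⟩
      exact (Fin.castSucc_lt_last x).ne (by simpa [Fin.succAbove_last] using hx)),
    Finset.prod_map]
  simp [Fin.succAbove_last]

lemma aux_prod_erase_last_snoc {M : Type*} [CommMonoid M] {n : ℕ} (u : Fin n → M) (b : M) :
    ∏ i ∈ Finset.univ.erase (Fin.last n), (Fin.snoc u b : Fin (n+1) → M) i = ∏ i, u i := by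
  rw [aux_prod_erase_succAbove]
  simp [Fin.succAbove_last]

lemma aux_drop_one {R : Type*} [CommRing R] {s : R} {n : ℕ} {I : Ideal R}
    (h : IsSNAbsorbingAssoc s n I) {N : ℕ} (r : Fin N → R) (T : Finset (Fin N))
    (hT : n + 1 ≤ T.card) (c : R) (hc : c * ∏ i ∈ T, r i ∈ I) :
    ∃ j ∈ T, s * (c * ∏ i ∈ T.erase j, r i) ∈ I := by
  obtain ⟨U, hUT, hU⟩ := Finset.exists_subset_card_eq (s := T) (n := n) (by omega)
  set e := U.orderIsoOfFin hU with he
  set f : Fin n → Fin N := fun i => (e i : Fin N) with hf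
  have hfU : ∀ i, f i ∈ U := fun i => (e i).2
  have hfinj : Function.Injective f := fun a b hab => e.injective (Subtype.ext hab)
  have hfprod : ∏ i : Fin n, r (f i) = ∏ u ∈ U, r u := by
    rw [← Finset.prod_coe_sort U r]
    exact (Fintype.prod_equiv e.toEquiv _ _ (fun i => rfl))
  set b := c * ∏ i ∈ T \ U, r i with hb
  set t : Fin (n+1) → R := Fin.snoc (fun i => r (f i)) b with ht
  have hprod : ∏ i, t i ∈ I := by
    rw [Fin.prod_univ_castSucc]
    simp only [ht, Fin.snoc_castSucc, Fin.snoc_last]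
    rw [hfprod]
    have heq : (∏ u ∈ U, r u) * b = c * ∏ i ∈ T, r i := by
      rw [hb, ← Finset.prod_sdiff hUT]; ring
    rw [heq]; exact hc
  obtain ⟨j, hj⟩ := h t hprod
  cases j using Fin.lastCases with
  | last =>
      rw [ht, aux_prod_erase_last_snoc, hfprod] at hj
      have hne : (T \ U).Nonempty := by
        rw [← Finset.card_pos, Finset.card_sdiff_of_subset hUT]; omega
      obtain ⟨c0, hc0⟩ := hne
      have hc0T : c0 ∈ T := (Finset.mem_sdiff.1 hc0).1
      have hc0U : c0 ∉ U := (Finset.mem_sdiff.1 hc0).2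
      refine ⟨c0, hc0T, ?_⟩
      have hUsub : U ⊆ T.erase c0 := fun x hx =>
        Finset.mem_erase.2 ⟨fun hxc => hc0U (hxc ▸ hx), hUT hx⟩
      rw [← Finset.prod_sdiff hUsub]
      have heq : s * (c * ((∏ x ∈ T.erase c0 \ U, r x) * ∏ x ∈ U, r x)) =
          (c * ∏ x ∈ T.erase c0 \ U, r x) * (s * ∏ x ∈ U, r x) := by ring
      rw [heq]
      exact I.mul_mem_left _ hj
  | cast k =>
      rw [ht, aux_prod_erase_castSucc_snoc] at hj
      refine ⟨f k, hUT (hfU k), ?_⟩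
      have himg : Finset.univ.image f = U := by
        apply Finset.eq_of_subset_of_card_le (fun x hx => ?_)
        · rw [Finset.card_image_of_injective _ hfinj, Finset.card_univ, Fintype.card_fin, hU]
        · obtain ⟨i, -, rfl⟩ := Finset.mem_image.1 hx
          exact hfU i
      have h2 : ∏ i ∈ Finset.univ.erase k, r (f i) = ∏ u ∈ U.erase (f k), r u := by
        rw [← Finset.prod_image (fun a _ b _ hab => hfinj hab), Finset.image_erase hfinj, himg]
      rw [h2] at hj
      have hUsub : U.erase (f k) ⊆ T.erase (f k) := Finset.erase_subset_erase _ hUT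
      have hsd : T.erase (f k) \ U.erase (f k) = T \ U := by
        ext x
        simp only [Finset.mem_sdiff, Finset.mem_erase]
        constructor
        · rintro ⟨⟨hxk, hxT⟩, hx⟩
          exact ⟨hxT, fun hxU => hx ⟨hxk, hxU⟩⟩
        · rintro ⟨hxT, hxU⟩
          exact ⟨⟨fun hxk => hxU (hxk ▸ hfU k), hxT⟩, fun hx => hxU hx.2⟩
      rw [← Finset.prod_sdiff hUsub, hsd]
      have heq : s * (c * ((∏ x ∈ T \ U, r x) * ∏ x ∈ U.erase (f k), r x)) =
          s * (b * ∏ u ∈ U.erase (f k), r u) := by rw [hb]; ring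
      rw [heq]
      exact hj

lemma aux_key {R : Type*} [CommRing R] {s : R} {n : ℕ} {I : Ideal R}
    (h : IsSNAbsorbingAssoc s n I) :
    ∀ (k : ℕ) {N : ℕ} (r : Fin N → R) (T : Finset (Fin N)) (c : R),
      T.card = n + 1 + k → c * ∏ i ∈ T, r i ∈ I →
      ∃ U ⊆ T, U.card = n ∧ s ^ (k + 1) * (c * ∏ i ∈ U, r i) ∈ I := by
  intro k
  induction k with
  | zero =>
      intro N r T c hcard hc
      obtain ⟨j, hjT, hj⟩ := aux_drop_one h r T (by omega) c hc
      exact ⟨T.erase j, Finset.erase_subset _ _,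
        by rw [Finset.card_erase_of_mem hjT]; omega, by simpa [pow_one] using hj⟩
  | succ k ih =>
      intro N r T c hcard hc
      obtain ⟨j, hjT, hj⟩ := aux_drop_one h r T (by omega) c hc
      obtain ⟨U, hUsub, hUcard, hU⟩ := ih r (T.erase j) (s * c)
        (by rw [Finset.card_erase_of_mem hjT]; omega) (by rw [mul_assoc]; exact hj)
      refine ⟨U, hUsub.trans (Finset.erase_subset _ _), hUcard, ?_⟩
      have heq : s ^ (k + 1 + 1) * (c * ∏ i ∈ U, r i) =
          s ^ (k + 1) * (s * c * ∏ i ∈ U, r i) := by ring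
      rw [heq]
      exact hU

theorem stmt_2 {R : Type*} [CommRing R] (S₁ S₂ S : Submonoid R)
    (n₁ n₂ : ℕ) (hn₁ : 0 < n₁) (hn₂ : 0 < n₂)
    (I₁ I₂ : Ideal R)
    (hd₁ : Disjoint (I₁ : Set R) (S₁ : Set R))
    (hd₂ : Disjoint (I₂ : Set R) (S₂ : Set R))
    (hS : (S : Set R) = {x : R | ∃ s₁ ∈ S₁, ∃ s₂ ∈ S₂, x = s₁ * s₂})
    (hd : Disjoint ((I₁ ⊓ I₂ : Ideal R) : Set R) (S : Set R))
    (hA₁ : IsSNAbsorbing (S₁ : Set R) n₁ I₁)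
    (hA₂ : IsSNAbsorbing (S₂ : Set R) n₂ I₂) :
    IsSNAbsorbing (S : Set R) (n₁ + n₂) (I₁ ⊓ I₂) := by
  obtain ⟨s₁, hs₁S, hs₁⟩ := hA₁
  obtain ⟨s₂, hs₂S, hs₂⟩ := hA₂
  refine ⟨s₁ ^ (n₂ + 1) * s₂ ^ (n₁ + 1), ?_, ?_⟩
  · rw [hS]
    exact ⟨s₁ ^ (n₂ + 1), pow_mem hs₁S _, s₂ ^ (n₁ + 1), pow_mem hs₂S _, rfl⟩
  · intro r hr
    rw [Submodule.mem_inf] at hr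
    obtain ⟨U₁, hU₁sub, hU₁card, hU₁⟩ := aux_key hs₁ n₂ r Finset.univ 1
      (by simp; omega) (by simpa using hr.1)
    obtain ⟨U₂, hU₂sub, hU₂card, hU₂⟩ := aux_key hs₂ n₁ r Finset.univ 1
      (by simp; omega) (by simpa using hr.2)
    rw [one_mul] at hU₁ hU₂
    have hcard : (U₁ ∪ U₂).card < (Finset.univ : Finset (Fin (n₁ + n₂ + 1))).card := by
      have := Finset.card_union_le U₁ U₂
      simp only [Finset.card_univ, Fintype.card_fin]
      omega
    have hss : U₁ ∪ U₂ ⊂ Finset.univ := Finset.ssubset_univ_iff.2 (fun h => by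
      rw [h] at hcard; omega)
    obtain ⟨j, -, hj⟩ := Finset.exists_of_ssubset hss
    have hj₁ : j ∉ U₁ := fun h => hj (Finset.mem_union_left _ h)
    have hj₂ : j ∉ U₂ := fun h => hj (Finset.mem_union_right _ h)
    refine ⟨j, Submodule.mem_inf.2 ⟨?_, ?_⟩⟩
    · have hsub : U₁ ⊆ Finset.univ.erase j := fun x hx =>
        Finset.mem_erase.2 ⟨fun hxj => hj₁ (hxj ▸ hx), Finset.mem_univ x⟩
      rw [← Finset.prod_sdiff hsub]
      have heq : s₁ ^ (n₂ + 1) * s₂ ^ (n₁ + 1) *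
          ((∏ x ∈ Finset.univ.erase j \ U₁, r x) * ∏ x ∈ U₁, r x) =
          (s₂ ^ (n₁ + 1) * ∏ x ∈ Finset.univ.erase j \ U₁, r x) *
            (s₁ ^ (n₂ + 1) * ∏ x ∈ U₁, r x) := by ring
      rw [heq]
      exact I₁.mul_mem_left _ hU₁
    · have hsub : U₂ ⊆ Finset.univ.erase j := fun x hx =>
        Finset.mem_erase.2 ⟨fun hxj => hj₂ (hxj ▸ hx), Finset.mem_univ x⟩
      rw [← Finset.prod_sdiff hsub]
      have heq : s₁ ^ (n₂ + 1) * s₂ ^ (n₁ + 1) *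
          ((∏ x ∈ Finset.univ.erase j \ U₂, r x) * ∏ x ∈ U₂, r x) =
          (s₁ ^ (n₂ + 1) * ∏ x ∈ Finset.univ.erase j \ U₂, r x) *
            (s₂ ^ (n₁ + 1) * ∏ x ∈ U₂, r x) := by ring
      rw [heq]
      exact I₂.mul_mem_left _ hU₂
end

section
/- Let R be a commutative ring with identity, S a multiplicative subset of R, m a positive integer, and let I_1, …, I_m be ideals of R, each disjoint from S. If for each 1 ≤ i ≤ m the ideal I_i is an S-n_i-absorbing ideal of R (n_i a positive integer), then I_1 ∩ ⋯ ∩ I_m is an S-n-absorbing ideal of R, where n = n_1 + ⋯ + n_m. -/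
open Finset

theorem Finset.prod_insert_update {ι M : Type*} [CommMonoid M] [DecidableEq ι] {a : ι}
    {D : Finset ι} (ha : a ∉ D) (r : ι → M) (v : M) :
    ∏ i ∈ insert a D, Function.update r a v i = v * ∏ i ∈ D, r i := by
  rw [prod_insert ha, Function.update_self, prod_update_of_notMem ha]

namespace IsSNAbsorbingAssoc

variable {R : Type*} [CommRing R] {s : R} {n : ℕ} {I : Ideal R} {ι : Type*} [DecidableEq ι]

theorem exists_erase_mem (h : IsSNAbsorbingAssoc s n I) {C : Finset ι} (hC : #C = n + 1)
    (r : ι → R) (hr : ∏ i ∈ C, r i ∈ I) : ∃ j ∈ C, s * ∏ i ∈ C.erase j, r i ∈ I := by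
  let e : Fin (n + 1) ≃ C := (Fintype.equivFinOfCardEq (by simpa using hC)).symm
  obtain ⟨j, hj⟩ := h (fun k ↦ r (e k)) (by rwa [e.prod_comp (fun c ↦ r c), prod_coe_sort])
  refine ⟨e j, (e j).2, ?_⟩
  rwa [← prod_erase_attach, ← univ_eq_attach,
    ← prod_equiv e (s := univ.erase j) (by simp) (fun _ _ ↦ rfl)]

theorem exists_subset_card_le (h : IsSNAbsorbingAssoc s n I) (r : ι → R) (A : Finset ι)
    (x : R) (hA : x * ∏ i ∈ A, r i ∈ I) :
    ∃ T ⊆ A, #T ≤ n ∧ s ^ #A * x * ∏ i ∈ T, r i ∈ I := by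
  induction A using Finset.strongInduction generalizing x with
  | H A ih =>
  by_cases hcard : #A ≤ n
  · exact ⟨A, subset_rfl, hcard, by rw [mul_assoc]; exact I.mul_mem_left _ hA⟩
  obtain ⟨a, ha⟩ : A.Nonempty := card_pos.mp (by omega)
  obtain ⟨B, hBa, hB⟩ := exists_subset_card_eq (s := A.erase a) (n := n)
    (by rw [card_erase_of_mem ha]; omega)
  have haB : a ∉ B := fun haB ↦ by simpa using hBa haB
  have hBA : B ⊆ A := hBa.trans (erase_subset a A)
  -- Merge the elements outside `B`, together with `x`, into a single factor placed at `a`.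
  obtain ⟨j, hjC, hj⟩ := h.exists_erase_mem (C := insert a B)
    (by rw [card_insert_of_notMem haB, hB]) (Function.update r a (x * ∏ i ∈ A \ B, r i))
    (by rwa [prod_insert_update haB, mul_assoc, prod_sdiff hBA])
  rcases mem_insert.mp hjC with rfl | hjB
  · rw [erase_insert haB, prod_update_of_notMem haB] at hj
    refine ⟨B, hBA, hB.le, I.mem_of_dvd ?_ hj⟩
    exact mul_dvd_mul (dvd_mul_of_dvd_left (dvd_pow_self s (by omega)) x) dvd_rfl
  · rw [erase_insert_of_ne (by rintro rfl; exact haB hjB),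
      prod_insert_update (by simp [haB])] at hj
    have hjA := hBA hjB
    obtain ⟨T, hTA, hT, hTI⟩ := ih (A.erase j) (erase_ssubset hjA) (s * x) (by
      have hsdiff : A.erase j \ B.erase j = A \ B := by
        ext i; by_cases i = j <;> simp_all
      rw [← prod_sdiff (erase_subset_erase j hBA), hsdiff]
      convert hj using 1; ring)
    refine ⟨T, hTA.trans (erase_subset j A), hT, ?_⟩
    rw [← card_erase_add_one hjA]
    convert hTI using 1; ring

end IsSNAbsorbingAssoc

theorem IsSNAbsorbingAssoc.iInf {R : Type*} [CommRing R] {ι : Type*} [Fintype ι]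
    {I : ι → Ideal R} {t : ι → R} {N : ι → ℕ} (h : ∀ i, IsSNAbsorbingAssoc (t i) (N i) (I i)) :
    IsSNAbsorbingAssoc (∏ i, t i ^ (∑ i, N i + 1)) (∑ i, N i) (⨅ i, I i) := by
  intro r hr
  choose T _ hTN hT using fun i ↦
    (h i).exists_subset_card_le r univ 1 (by simpa using Ideal.mem_iInf.mp hr i)
  -- The sets `T i` have at most `∑ i, N i` elements in total, one fewer than there are factors.
  obtain ⟨j, -, hj⟩ := exists_mem_notMem_of_card_lt_card (s := univ.biUnion T) (t := univ)
    (calc #(univ.biUnion T) ≤ ∑ i, #(T i) := card_biUnion_le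
      _ ≤ ∑ i, N i := sum_le_sum fun i _ ↦ hTN i
      _ < #(univ : Finset (Fin (∑ i, N i + 1))) := by simp)
  refine ⟨j, Ideal.mem_iInf.mpr fun i ↦ (I i).mem_of_dvd ?_ (hT i)⟩
  have hTj : T i ⊆ univ.erase j := fun k hk ↦
    mem_erase.mpr ⟨by rintro rfl; exact hj (mem_biUnion.mpr ⟨i, mem_univ i, hk⟩), mem_univ k⟩
  simpa using mul_dvd_mul (dvd_prod_of_mem (fun k ↦ t k ^ (∑ i, N i + 1)) (mem_univ i))
    (prod_dvd_prod_of_subset _ _ r hTj)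

theorem stmt_3_general {R : Type*} [CommRing R] (S : Submonoid R) (m : ℕ)
    (I : Fin m → Ideal R) (N : Fin m → ℕ)
    (hA : ∀ i, IsSNAbsorbing (S : Set R) (N i) (I i)) :
    IsSNAbsorbing (S : Set R) (∑ i, N i) (⨅ i, I i) := by
  choose t ht hassoc using hA
  exact ⟨_, prod_mem fun i _ ↦ pow_mem (ht i) _, IsSNAbsorbingAssoc.iInf hassoc⟩

theorem stmt_3 {R : Type*} [CommRing R] (S : Submonoid R) (m : ℕ) (hm : 0 < m)
    (I : Fin m → Ideal R) (N : Fin m → ℕ) (hN : ∀ i, 0 < N i)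
    (hd : ∀ i, Disjoint ((I i : Ideal R) : Set R) (S : Set R))
    (hA : ∀ i, IsSNAbsorbing (S : Set R) (N i) (I i)) :
    IsSNAbsorbing (S : Set R) (∑ i, N i) (⨅ i, I i) :=
  stmt_3_general S m I N hA
end

section
/- Let R and T be commutative rings with identity, S a multiplicative subset of R, φ : R → T a ring homomorphism, n a positive integer, and I an ideal of R with I ∩ S = ∅ and ker(φ) ⊆ I. Then I is an S-n-absorbing ideal of R if and only if φ(I) is a φ(S)-n-absorbing ideal of the image ring φ(R). -/
theorem stmt_5 {R T : Type*} [CommRing R] [CommRing T] (S : Submonoid R)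
    (φ : R →+* T) (n : ℕ) (hn : 0 < n) (I : Ideal R)
    (hIS : Disjoint (I : Set R) (S : Set R))
    (hker : RingHom.ker φ ≤ I) :
    IsSNAbsorbing (S : Set R) n I ↔
      IsSNAbsorbing
        ((S.map φ.rangeRestrict.toMonoidHom : Submonoid φ.range) : Set φ.range) n
        (I.map φ.rangeRestrict) := by
  set ψ := φ.rangeRestrict with hψ
  have hsurj : Function.Surjective ψ := φ.rangeRestrict_surjective
  have hkerψ : RingHom.ker ψ ≤ I := by
    rw [hψ, RingHom.ker_rangeRestrict]; exact hker
  have hcm : Ideal.comap ψ (Ideal.map ψ I) = I := by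
    rw [Ideal.comap_map_of_surjective ψ hsurj I, sup_eq_left]
    exact fun x hx => hkerψ hx
  constructor
  · rintro ⟨s, hs, habs⟩
    refine ⟨ψ s, ⟨s, hs, rfl⟩, fun r hr => ?_⟩
    choose r' hr' using fun i => hsurj (r i)
    have hprod : (∏ i, r' i) ∈ I := by
      rw [← hcm, Ideal.mem_comap, map_prod]
      simpa [hr'] using hr
    obtain ⟨j, hj⟩ := habs r' hprod
    refine ⟨j, ?_⟩
    have := Ideal.mem_map_of_mem ψ hj
    rw [map_mul, map_prod] at this
    simpa [hr'] using this
  · rintro ⟨t, ⟨s, hs, rfl⟩, habs⟩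
    refine ⟨s, hs, fun r hr => ?_⟩
    have hr' : (∏ i, ψ (r i)) ∈ Ideal.map ψ I := by
      rw [← map_prod]; exact Ideal.mem_map_of_mem ψ hr
    obtain ⟨j, hj⟩ := habs (fun i => ψ (r i)) hr'
    refine ⟨j, ?_⟩
    rw [← hcm, Ideal.mem_comap, map_mul, map_prod]
    exact hj
end

section
/- Let R and T be commutative rings with identity, S a multiplicative subset of R, φ : R → T a ring homomorphism, n a positive integer, and J an ideal of the image ring φ(R) with J ∩ φ(S) = ∅. Then J is a φ(S)-n-absorbing ideal of φ(R) if and only if φ^{-1}(J) is an S-n-absorbing ideal of R. -/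
theorem stmt_6 {R T : Type*} [CommRing R] [CommRing T] (S : Submonoid R)
    (φ : R →+* T) (n : ℕ) (hn : 0 < n) (J : Ideal φ.range)
    (hJS : Disjoint (J : Set φ.range)
      ((S.map φ.rangeRestrict.toMonoidHom : Submonoid φ.range) : Set φ.range)) :
    IsSNAbsorbing
        ((S.map φ.rangeRestrict.toMonoidHom : Submonoid φ.range) : Set φ.range) n J ↔
      IsSNAbsorbing (S : Set R) n (J.comap φ.rangeRestrict) := by
  constructor
  · rintro ⟨s', hs', hass⟩
    obtain ⟨s, hs, rfl⟩ := hs'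
    refine ⟨s, hs, fun r hr => ?_⟩
    obtain ⟨j, hj⟩ := hass (fun i => φ.rangeRestrict (r i))
      (by simpa [Ideal.mem_comap, ← map_prod] using hr)
    exact ⟨j, by simpa [Ideal.mem_comap, map_mul, ← map_prod] using hj⟩
  · rintro ⟨s, hs, hass⟩
    refine ⟨φ.rangeRestrict s, ⟨s, hs, rfl⟩, fun r' hr' => ?_⟩
    choose r hr using fun i => φ.rangeRestrict_surjective (r' i)
    obtain ⟨j, hj⟩ := hass r (by simpa [Ideal.mem_comap, map_prod, hr] using hr')
    refine ⟨j, ?_⟩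
    have h2 := Ideal.mem_comap.1 hj
    simpa [map_mul, map_prod, hr] using h2
end

section
/- Let R be a commutative ring with identity, S a multiplicative subset of R, n a positive integer, and I an ideal of R with I ∩ S = ∅. Then I is an S-n-absorbing ideal of R if and only if there exists s ∈ S such that the colon ideal I : s is an n-absorbing ideal of R. -/
/-- `I` is an `n`-absorbing ideal. -/
def IsNAbsorbing {R : Type*} [CommRing R] (n : ℕ) (I : Ideal R) : Prop :=
  ∀ r : Fin (n + 1) → R, (∏ i, r i) ∈ I →
    ∃ j : Fin (n + 1), ∏ i ∈ Finset.univ.erase j, r i ∈ I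

theorem stmt_8 {R : Type*} [CommRing R] (S : Submonoid R) (n : ℕ) (hn : 0 < n)
    (I : Ideal R) (hIS : Disjoint (I : Set R) (S : Set R)) :
    IsSNAbsorbing (S : Set R) n I ↔
      ∃ s ∈ S, IsNAbsorbing n (I.colon (Ideal.span {s})) := by
  constructor
  · rintro ⟨s, hs, hA⟩
    refine ⟨s ^ (n + 1), pow_mem hs _, ?_⟩
    intro r hr
    rw [Ideal.mem_colon_span_singleton] at hr
    have hprod : (∏ i, (s * r i)) ∈ I := by
      rw [Finset.prod_mul_distrib, Finset.prod_const, Finset.card_univ, Fintype.card_fin,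
        mul_comm]
      exact hr
    obtain ⟨j, hj⟩ := hA (fun i => s * r i) hprod
    refine ⟨j, ?_⟩
    rw [Ideal.mem_colon_span_singleton]
    have hcard : (Finset.univ.erase j).card = n := by
      rw [Finset.card_erase_of_mem (Finset.mem_univ j), Finset.card_univ, Fintype.card_fin]
      simp
    have : s * ∏ i ∈ Finset.univ.erase j, (s * r i)
        = (∏ i ∈ Finset.univ.erase j, r i) * s ^ (n + 1) := by
      rw [Finset.prod_mul_distrib, Finset.prod_const, hcard]
      ring
    rw [← this]
    exact hj
  · rintro ⟨s, hs, hN⟩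
    refine ⟨s, hs, ?_⟩
    intro r hr
    have : (∏ i, r i) ∈ I.colon (Ideal.span {s}) := by
      rw [Ideal.mem_colon_span_singleton]
      exact I.mul_mem_right s hr
    obtain ⟨j, hj⟩ := hN r this
    rw [Ideal.mem_colon_span_singleton] at hj
    exact ⟨j, by rwa [mul_comm]⟩
end

section
/- Let R be a commutative ring with identity, S a multiplicative subset of R, n a positive integer, and I an ideal of R with I ∩ S = ∅. If I is an S-n-absorbing ideal of R, then the set of minimal prime ideals of I that are disjoint from S is finite and has at most n elements. -/
/-!
Suppose `I` is `S`-`n`-absorbing with witness `s ∈ S` and has `n + 1` distinct minimal primes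
`P₀, …, Pₙ` avoiding `s`. By prime avoidance pick `xᵢ ∈ Pᵢ` outside the other `Pⱼ`. Then
`x = ∏ xᵢ` lies in every `Pⱼ`; since the `Pⱼ` are minimal over `I`, some `u` outside all of
them has `u * x ^ k ∈ I`. The `n + 1` factors `u * xᵢ ^ k` multiply into `I`, but each `Pⱼ`
contains only the `j`-th of them, so `s` times any `n` of them avoids some `Pⱼ ⊇ I`.
-/

namespace Ideal

variable {R : Type*} [CommRing R] {I : Ideal R} {T : Set (Ideal R)}

theorem IsMinimalPrime.eq_of_le {p q : Ideal R} (hp : I.IsMinimalPrime p) (hq : q.IsPrime)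
    (hIq : I ≤ q) (hqp : q ≤ p) : q = p :=
  Minimal.eq_of_le hp ⟨hq, hIq⟩ hqp

theorem exists_mem_forall_notMem_of_finite_minimalPrimes (hT : T.Finite)
    (hTI : T ⊆ I.minimalPrimes) {p : Ideal R} (hp : p ∈ T) :
    ∃ x ∈ p, ∀ q ∈ T, q ≠ p → x ∉ q := by
  have hcover : ¬ (p : Set R) ⊆ ⋃ q ∈ T \ {p}, (q : Set R) := by
    rw [subset_union_prime_finite hT.sdiff p p fun q hq _ _ => (hTI hq.1).isPrime]
    rintro ⟨q, ⟨hqT, hqp⟩, hpq⟩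
    exact hqp ((hTI hqT).eq_of_le (hTI hp).isPrime (hTI hp).le hpq).symm
  obtain ⟨x, hxp, hx⟩ := Set.not_subset.1 hcover
  exact ⟨x, hxp, fun q hqT hqp hxq => hx (Set.mem_biUnion ⟨hqT, hqp⟩ hxq)⟩

theorem exists_mul_pow_mem_of_mem_finite_minimalPrimes (hT : T.Finite)
    (hTI : T ⊆ I.minimalPrimes) {x : R} (hx : ∀ p ∈ T, x ∈ p) :
    ∃ u, (∀ p ∈ T, u ∉ p) ∧ ∃ k : ℕ, u * x ^ k ∈ I := by
  let U : Submonoid R := ⨅ p : T, have := (hTI p.2).isPrime; p.1.primeCompl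
  have hU {u : R} : u ∈ U ↔ ∀ p ∈ T, u ∉ p := by
    simp [U, Submonoid.mem_iInf, mem_primeCompl_iff]
  suffices ¬ Disjoint (I : Set R) ↑(U ⊔ Submonoid.powers x) by
    obtain ⟨_, hI, hM⟩ := Set.not_disjoint_iff.1 this
    obtain ⟨u, hu, _, ⟨k, rfl⟩, rfl⟩ := Submonoid.mem_sup.1 hM
    exact ⟨u, hU.1 hu, k, hI⟩
  intro hdisj
  obtain ⟨Q, hQ, hIQ, hQdisj⟩ := exists_le_prime_disjoint I _ hdisj
  have hQT : (Q : Set R) ⊆ ⋃ p ∈ T, (p : Set R) := by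
    intro q hq
    by_contra hqT
    refine Set.disjoint_left.1 hQdisj hq (Submonoid.mem_sup_left (hU.2 fun p hp hqp => ?_))
    exact hqT (Set.mem_biUnion hp hqp)
  obtain ⟨p, hpT, hQp⟩ := (subset_union_prime_finite hT ⊥ ⊥ fun p hp _ _ =>
    (hTI hp).isPrime).1 hQT
  have hpQ : p = Q := ((hTI hpT).eq_of_le hQ hIQ hQp).symm
  exact Set.disjoint_left.1 hQdisj (hpQ ▸ hx p hpT)
    (Submonoid.mem_sup_right (Submonoid.mem_powers x))

end Ideal

open Finset in
theorem IsSNAbsorbingAssoc.not_injective_of_minimalPrimes {R : Type*} [CommRing R] {s : R}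
    {n : ℕ} {I : Ideal R} (h : IsSNAbsorbingAssoc s n I) {f : Fin (n + 1) → Ideal R}
    (hf : ∀ i, f i ∈ I.minimalPrimes) (hs : ∀ i, s ∉ f i) : ¬ Function.Injective f := by
  intro hinj
  have hT : Set.range f ⊆ I.minimalPrimes := Set.range_subset_iff.2 hf
  choose x hx hx_notMem using fun i =>
    Ideal.exists_mem_forall_notMem_of_finite_minimalPrimes (Set.finite_range f) hT
      (Set.mem_range_self i)
  have hx_ne {i j} (hij : i ≠ j) : x i ∉ f j :=
    hx_notMem i _ (Set.mem_range_self j) (hinj.ne hij.symm)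
  obtain ⟨u, hu, k, huk⟩ := Ideal.exists_mul_pow_mem_of_mem_finite_minimalPrimes
    (Set.finite_range f) hT (x := ∏ i, x i) (Set.forall_mem_range.2 fun j =>
      (f j).mem_of_dvd (dvd_prod_of_mem x (mem_univ j)) (hx j))
  obtain ⟨j, hj⟩ := h (fun i => u * x i ^ k) <| by
    have : ∏ i, u * x i ^ k = u ^ n * (u * (∏ i, x i) ^ k) := by
      rw [prod_mul_distrib, prod_const, card_univ, Fintype.card_fin, prod_pow]; ring
    exact this ▸ I.mul_mem_left _ huk
  have := (hf j).isPrime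
  refine (this.mul_notMem (hs j) fun hprod => ?_) ((hf j).le hj)
  obtain ⟨i, hi, hij⟩ := Ideal.IsPrime.prod_mem_iff.1 hprod
  exact this.mul_notMem (hu _ (Set.mem_range_self j))
    (fun hpow => hx_ne (ne_of_mem_erase hi) (this.mem_of_pow_mem k hpow)) hij

theorem stmt_9_general {R : Type*} [CommRing R] (S : Submonoid R) (n : ℕ)
    (I : Ideal R)
    (hI : IsSNAbsorbing (S : Set R) n I) :
    {P ∈ I.minimalPrimes | Disjoint (P : Set R) (S : Set R)}.Finite ∧
      {P ∈ I.minimalPrimes | Disjoint (P : Set R) (S : Set R)}.ncard ≤ n := by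
  obtain ⟨s, hsS, hs⟩ := hI
  rw [← Set.encard_le_coe_iff_finite_ncard_le]
  by_contra! hlt
  obtain ⟨f, hfA, hf⟩ := (Set.finite_univ (α := Fin (n + 1))).exists_injOn_of_encard_le
    (t := {P ∈ I.minimalPrimes | Disjoint (P : Set R) (S : Set R)})
    (by simpa using Order.add_one_le_of_lt hlt)
  exact hs.not_injective_of_minimalPrimes (fun i => (hfA (Set.mem_univ i)).1)
    (fun i hsf => Set.disjoint_left.1 (hfA (Set.mem_univ i)).2 hsf hsS) (Set.injOn_univ.1 hf)

theorem stmt_9 {R : Type*} [CommRing R] (S : Submonoid R) (n : ℕ) (hn : 0 < n)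
    (I : Ideal R) (hIS : Disjoint (I : Set R) (S : Set R))
    (hI : IsSNAbsorbing (S : Set R) n I) :
    {P ∈ I.minimalPrimes | Disjoint (P : Set R) (S : Set R)}.Finite ∧
      {P ∈ I.minimalPrimes | Disjoint (P : Set R) (S : Set R)}.ncard ≤ n :=
  stmt_9_general S n I hI
end

section
/- Let R be a commutative ring with identity, S a strongly multiplicative subset of R, n a positive integer, and {I_α | α ∈ Λ} a nonempty chain (with respect to inclusion) of S-n-absorbing ideals of R. Then ⋂_{α ∈ Λ} I_α is an S-n-absorbing ideal of R. -/
section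

variable {R : Type*} [CommRing R] {n : ℕ}

theorem IsSNAbsorbingAssoc.of_dvd {s t : R} {I : Ideal R} (h : IsSNAbsorbingAssoc s n I)
    (hst : s ∣ t) : IsSNAbsorbingAssoc t n I := by
  intro r hr
  obtain ⟨j, hj⟩ := h r hr
  obtain ⟨c, rfl⟩ := hst
  exact ⟨j, by simpa only [mul_comm s c, mul_assoc] using I.mul_mem_left c hj⟩

theorem isSNAbsorbingAssoc_iInf_of_directed {ι : Type*} {I : ι → Ideal R}
    (hdir : Directed (· ≥ ·) I) {t : R} (h : ∀ α, IsSNAbsorbingAssoc t n (I α)) :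
    IsSNAbsorbingAssoc t n (⨅ α, I α) := by
  intro r hr
  by_contra! hcon
  simp only [Ideal.mem_iInf, not_forall] at hcon
  choose α hα using hcon
  have : Nonempty ι := ⟨α 0⟩
  obtain ⟨z, hz⟩ := hdir.finite_le α
  obtain ⟨j, hj⟩ := h z r (Ideal.mem_iInf.mp hr z)
  exact hα j (hz j hj)

end

theorem stmt_10_general {R : Type*} [CommRing R] (S : Submonoid R)
    (hstrong : ∀ A : Set R, A ⊆ (S : Set R) →
      ((⋂ a ∈ A, ((Ideal.span {a} : Ideal R) : Set R)) ∩ (S : Set R)).Nonempty)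
    (n : ℕ) {ι : Type*} (I : ι → Ideal R)
    (hchain : ∀ α β, I α ≤ I β ∨ I β ≤ I α)
    (hA : ∀ α, IsSNAbsorbing (S : Set R) n (I α)) :
    IsSNAbsorbing (S : Set R) n (⨅ α, I α) := by
  choose s hsS hsA using hA
  obtain ⟨t, hts, htS⟩ := hstrong (Set.range s) (Set.range_subset_iff.mpr hsS)
  have hdvd : ∀ α, s α ∣ t := fun α =>
    Ideal.mem_span_singleton.mp (Set.mem_iInter₂.mp hts (s α) ⟨α, rfl⟩)
  have hdir : Directed (· ≥ ·) I := fun α β => by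
    rcases hchain α β with h | h
    exacts [⟨α, le_rfl, h⟩, ⟨β, h, le_rfl⟩]
  exact ⟨t, htS, isSNAbsorbingAssoc_iInf_of_directed hdir fun α => (hsA α).of_dvd (hdvd α)⟩

theorem stmt_10 {R : Type*} [CommRing R] (S : Submonoid R)
    (hstrong : ∀ A : Set R, A ⊆ (S : Set R) →
      ((⋂ a ∈ A, ((Ideal.span {a} : Ideal R) : Set R)) ∩ (S : Set R)).Nonempty)
    (n : ℕ) (hn : 0 < n) {ι : Type*} [Nonempty ι] (I : ι → Ideal R)
    (hchain : ∀ α β, I α ≤ I β ∨ I β ≤ I α)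
    (hd : ∀ α, Disjoint ((I α : Ideal R) : Set R) (S : Set R))
    (hA : ∀ α, IsSNAbsorbing (S : Set R) n (I α)) :
    IsSNAbsorbing (S : Set R) n (⨅ α, I α) :=
  stmt_10_general S hstrong n I hchain hA
end

section
/- Let R be a commutative ring with identity, S a multiplicative subset of R, n a positive integer, and I an ideal of R with I ∩ S = ∅. If I is an S-n-absorbing ideal of R, then the extension I·R_S of I to the localization R_S of R at S is an n-absorbing ideal of R_S. -/
/-!
Write `rᵢ = aᵢ / tᵢ`. If `∏ rᵢ ∈ I Rₛ`, then `u * ∏ aᵢ ∈ I` for some `u ∈ S`. Applying the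
`S`-`n`-absorbing property to the factorisation `(u a₀) a₁ ⋯ aₙ` yields `j` with
`s u ∏_{i ≠ j} aᵢ ∈ I`, and as `s u ∈ S` this says `∏_{i ≠ j} rᵢ ∈ I Rₛ`.
-/

open Finset

theorem IsLocalization.prod_mk' {R : Type*} [CommSemiring R] {M : Submonoid R} (Rₘ : Type*)
    [CommSemiring Rₘ] [Algebra R Rₘ] [IsLocalization M Rₘ] {ι : Type*} (F : Finset ι)
    (a : ι → R) (t : ι → M) :
    ∏ i ∈ F, mk' Rₘ (a i) (t i) = mk' Rₘ (∏ i ∈ F, a i) (∏ i ∈ F, t i) := by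
  classical
  induction F using Finset.induction with
  | empty => simp [mk'_one]
  | insert _ _ h ih => rw [prod_insert h, prod_insert h, prod_insert h, ih, ← mk'_mul]

theorem Finset.prod_erase_update_mul_dvd {ι M : Type*} [CommMonoid M] [DecidableEq ι]
    (F : Finset ι) (a : ι → M) (j k : ι) (u : M) :
    ∏ i ∈ F.erase j, Function.update a k (u * a k) i ∣ u * ∏ i ∈ F.erase j, a i := by
  by_cases hk : k ∈ F.erase j
  · rw [prod_update_of_mem hk, sdiff_singleton_eq_erase, mul_assoc, mul_prod_erase _ a hk]
  · rw [prod_congr rfl fun i hi => Function.update_of_ne (ne_of_mem_of_not_mem hi hk) _ _]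
    exact dvd_mul_left _ _

theorem IsSNAbsorbingAssoc.exists_mul_prod_erase_mem {R : Type*} [CommRing R] {s : R} {n : ℕ}
    {I : Ideal R} (h : IsSNAbsorbingAssoc s n I) (a : Fin (n + 1) → R) {u : R}
    (hu : u * ∏ i, a i ∈ I) : ∃ j, s * (u * ∏ i ∈ univ.erase j, a i) ∈ I := by
  have hprod : ∏ i, Function.update a 0 (u * a 0) i ∈ I := by
    rwa [prod_update_of_mem (mem_univ 0), sdiff_singleton_eq_erase, mul_assoc,
      mul_prod_erase _ a (mem_univ 0)]
  obtain ⟨j, hj⟩ := h _ hprod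
  exact ⟨j, I.mem_of_dvd (mul_dvd_mul_left s (prod_erase_update_mul_dvd _ a j 0 u)) hj⟩

theorem IsSNAbsorbingAssoc.isNAbsorbing_map {R : Type*} [CommRing R] {M : Submonoid R}
    (Rₘ : Type*) [CommRing Rₘ] [Algebra R Rₘ] [IsLocalization M Rₘ] {s : R} (hs : s ∈ M)
    {n : ℕ} {I : Ideal R} (h : IsSNAbsorbingAssoc s n I) :
    IsNAbsorbing n (I.map (algebraMap R Rₘ)) := by
  intro r hr
  choose a t ht using fun i => IsLocalization.exists_mk'_eq M (r i)
  simp only [← ht, IsLocalization.prod_mk', IsLocalization.mk'_mem_map_algebraMap_iff M]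
    at hr ⊢
  obtain ⟨u, hu, hmem⟩ := hr
  obtain ⟨j, hj⟩ := h.exists_mul_prod_erase_mem a hmem
  exact ⟨j, s * u, M.mul_mem hs hu, by rwa [mul_assoc]⟩

theorem stmt_11_general {R : Type*} [CommRing R] (S : Submonoid R) (n : ℕ)
    (I : Ideal R)
    (hI : IsSNAbsorbing (S : Set R) n I) :
    IsNAbsorbing n (I.map (algebraMap R (Localization S))) := by
  obtain ⟨s, hs, h⟩ := hI
  exact h.isNAbsorbing_map _ hs

theorem stmt_11 {R : Type*} [CommRing R] (S : Submonoid R) (n : ℕ) (hn : 0 < n)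
    (I : Ideal R) (hIS : Disjoint (I : Set R) (S : Set R))
    (hI : IsSNAbsorbing (S : Set R) n I) :
    IsNAbsorbing n (I.map (algebraMap R (Localization S))) :=
  stmt_11_general S n I hI
end

section
/- Let R be a commutative ring with identity, S a multiplicative subset of R, and I an ideal of R with I ∩ S = ∅. Then the following are equivalent: (1) there exists s ∈ S such that the colon ideal I : s is a finite intersection of S-primary ideals of R; (2) there exists s' ∈ S such that I : s' is a finite intersection of primary ideals of R; (3) the extension I·R_S is a finite intersection of primary ideals of the localization R_S, and Sat_S(I) = I : t for some t ∈ S. -/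
/-- `Q` is an `S`-primary ideal: `Q` is disjoint from `S` and there is `s ∈ S` such that
`ab ∈ Q` implies `sa ∈ Q` or `sb ∈ √Q`. -/
def IsSPrimary {R : Type*} [CommRing R] (S : Set R) (Q : Ideal R) : Prop :=
  Disjoint (Q : Set R) S ∧
    ∃ s ∈ S, ∀ a b : R, a * b ∈ Q → s * a ∈ Q ∨ s * b ∈ Q.radical

/-! Localization at `S` commutes with finite intersections, sends `S`-primary ideals to primary
ones, and does not see the difference between `I` and `I : s`. An `S`-primary `Q` with witness `w`
has `Sat_S(Q) = Q : w`, so multiplying the witnesses of the components of `I : s` gives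
`Sat_S(I) = I : t`; contracting a primary decomposition of `I·R_S` then decomposes `I : t`.
Conversely, in a primary decomposition of `I : s'`, multiplying `s'` by an element of `S` lying in
every component that meets `S` turns those components into `R`, and the remaining primary
components avoid `S`, hence are `S`-primary. -/

open Ideal

def IsFinInfOf {α : Type*} [CompleteLattice α] (P : α → Prop) (a : α) : Prop :=
  ∃ (m : ℕ) (f : Fin m → α), (∀ i, P (f i)) ∧ a = ⨅ i, f i

theorem isFinInfOf_iInf {α ι : Type*} [CompleteLattice α] [Finite ι] {P : α → Prop}
    {p : ι → Prop} {f : ι → α} (hf : ∀ i, p i → P (f i)) :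
    IsFinInfOf P (⨅ (i) (_ : p i), f i) := by
  have := Fintype.ofFinite {i // p i}
  let e := Fintype.equivFin {i // p i}
  refine ⟨Fintype.card {i // p i}, fun j => f (e.symm j), fun j => hf _ (e.symm j).2, ?_⟩
  rw [iInf_subtype', ← e.symm.iInf_comp]

namespace Ideal

variable {R : Type*} [CommRing R]

theorem colon_span_singleton_mul (I : Ideal R) (s t : R) :
    I.colon (span {s * t}) = (I.colon (span {s})).colon (span {t}) := by
  ext x
  simp only [mem_colon_span_singleton, mul_assoc, mul_comm t s]

theorem IsPrimary.colon_span_singleton_eq {Q : Ideal R} (hQ : Q.IsPrimary) {t : R}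
    (ht : t ∉ Q.radical) : Q.colon (span {t}) = Q :=
  le_antisymm
    (fun _ hx => ((isPrimary_iff.mp hQ).2 (mem_colon_span_singleton.mp hx)).resolve_right ht)
    le_colon

theorem disjoint_radical_of_disjoint {I : Ideal R} {S : Submonoid R}
    (h : Disjoint (I : Set R) S) : Disjoint (I.radical : Set R) S :=
  Set.disjoint_left.mpr fun _ ⟨n, hn⟩ hx => Set.disjoint_left.mp h hn (pow_mem hx n)

variable (S : Submonoid R)

/-- `t ∈ S` and `Sat_S(I) = I : t`. -/
def IsSaturationColon (I : Ideal R) (t : R) : Prop :=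
  t ∈ S ∧ ∀ x, ∀ u ∈ S, x * u ∈ I → x * t ∈ I

variable {S}

theorem IsSaturationColon.saturation_eq {I : Ideal R} {t : R} (h : I.IsSaturationColon S t) :
    {x : R | ∃ s ∈ S, x * s ∈ I} = (I.colon (span {t}) : Set R) := by
  ext x
  simp only [Set.mem_ofPred_eq, SetLike.mem_coe, mem_colon_span_singleton]
  exact ⟨fun ⟨u, hu, hxu⟩ => h.2 x u hu hxu, fun hxt => ⟨t, h.1, hxt⟩⟩

theorem IsSaturationColon.of_colon {I : Ideal R} {s t : R} (hs : s ∈ S)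
    (h : (I.colon (span {s})).IsSaturationColon S t) : I.IsSaturationColon S (s * t) := by
  refine ⟨mul_mem hs h.1, fun x u hu hxu => ?_⟩
  have hxus : x * u ∈ I.colon (span {s}) := mem_colon_span_singleton.mpr (I.mul_mem_right s hxu)
  rw [mul_comm s, ← mul_assoc, ← mem_colon_span_singleton]
  exact h.2 x u hu hxus

theorem exists_isSaturationColon_iInf {ι : Type*} [Fintype ι] {Q : ι → Ideal R}
    (h : ∀ i, ∃ t, (Q i).IsSaturationColon S t) : ∃ t, (⨅ i, Q i).IsSaturationColon S t := by
  choose t ht using h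
  refine ⟨∏ i, t i, Submonoid.prod_mem S fun i _ => (ht i).1, fun x u hu hxu => ?_⟩
  simp only [mem_iInf] at hxu ⊢
  intro i
  obtain ⟨c, hc⟩ := Finset.dvd_prod_of_mem t (Finset.mem_univ i)
  rw [hc, ← mul_assoc]
  exact mul_mem_right _ _ ((ht i).2 x u hu (hxu i))

end Ideal

section Primary

variable {R : Type*} [CommRing R] {S : Submonoid R}

theorem IsSPrimary.exists_isSaturationColon {Q : Ideal R} (hQ : IsSPrimary (S : Set R) Q) :
    ∃ t, Q.IsSaturationColon S t := by
  obtain ⟨hdisj, w, hw, hQw⟩ := hQ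
  refine ⟨w, hw, fun x u hu hxu => ?_⟩
  rw [mul_comm]
  exact (hQw x u hxu).resolve_right fun hwu =>
    Set.disjoint_left.mp (disjoint_radical_of_disjoint hdisj) hwu (mul_mem hw hu)

theorem Ideal.IsPrimary.isSPrimary {Q : Ideal R} (hQ : Q.IsPrimary)
    (hdisj : Disjoint (Q : Set R) S) : IsSPrimary (S : Set R) Q :=
  ⟨hdisj, 1, S.one_mem, fun _ _ hab => by simpa only [one_mul] using (isPrimary_iff.mp hQ).2 hab⟩

theorem exists_isFinInfOf_isSPrimary_colon {I : Ideal R} {s : R} (hs : s ∈ S)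
    (h : IsFinInfOf IsPrimary (I.colon (span {s}))) :
    ∃ s' ∈ S, IsFinInfOf (IsSPrimary (S : Set R)) (I.colon (span {s'})) := by
  obtain ⟨m, Q, hQ, hcol⟩ := h
  have hu : ∀ i, ∃ u ∈ S, ¬Disjoint (Q i : Set R) S → u ∈ Q i := by
    intro i
    by_cases hi : Disjoint (Q i : Set R) S
    · exact ⟨1, S.one_mem, fun h => (h hi).elim⟩
    · obtain ⟨u, huQ, huS⟩ := Set.not_disjoint_iff.mp hi
      exact ⟨u, huS, fun _ => huQ⟩
  choose u huS huQ using hu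
  have hσS : ∏ j, u j ∈ S := prod_mem fun j _ => huS j
  have hcomp : ∀ i, (Q i).colon (span {∏ j, u j}) = ⨅ (_ : Disjoint (Q i : Set R) S), Q i := by
    intro i
    by_cases hi : Disjoint (Q i : Set R) S
    · rw [iInf_pos hi]
      exact (hQ i).colon_span_singleton_eq
        (Set.disjoint_right.mp (disjoint_radical_of_disjoint hi) hσS)
    · rw [iInf_neg hi, Submodule.colon_eq_top_iff_subset, SetLike.coe_subset_coe, span_le,
        Set.singleton_subset_iff]
      exact (Finset.dvd_prod_of_mem u (Finset.mem_univ i)).elim fun c hc =>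
        hc ▸ mul_mem_right c _ (huQ i hi)
  refine ⟨s * ∏ j, u j, mul_mem hs hσS, ?_⟩
  rw [colon_span_singleton_mul, hcol, Submodule.iInf_colon, iInf_congr hcomp]
  exact isFinInfOf_iInf fun i hi => (hQ i).isSPrimary hi

theorem exists_isSaturationColon_of_colon {I : Ideal R} {s : R} (hs : s ∈ S)
    (h : IsFinInfOf (IsSPrimary (S : Set R)) (I.colon (span {s}))) :
    ∃ t, I.IsSaturationColon S t := by
  obtain ⟨m, Q, hQ, hcol⟩ := h
  obtain ⟨t, ht⟩ := exists_isSaturationColon_iInf fun i => (hQ i).exists_isSaturationColon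
  rw [← hcol] at ht
  exact ⟨s * t, ht.of_colon hs⟩

end Primary

theorem IsLocalization.map_iInf {R A ι : Type*} [CommRing R] [CommRing A] [Algebra R A]
    (S : Submonoid R) [IsLocalization S A] [Fintype ι] (Q : ι → Ideal R) :
    (⨅ i, Q i).map (algebraMap R A) = ⨅ i, (Q i).map (algebraMap R A) := by
  simp only [← Finset.inf_univ_eq_iInf, ← IsLocalization.mapFrameHom_apply S A, map_finset_inf,
    Function.comp_def]

section Localization

variable {R : Type*} [CommRing R] (S : Submonoid R) {A : Type*} [CommRing A] [Algebra R A]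
  [IsLocalization S A]

theorem IsLocalization.coe_comap_map_eq_saturation (I : Ideal R) :
    ((I.map (algebraMap R A)).comap (algebraMap R A) : Set R) = {x | ∃ s ∈ S, x * s ∈ I} := by
  ext x
  simp only [SetLike.mem_coe, mem_comap, IsLocalization.algebraMap_mem_map_algebraMap_iff S,
    Set.mem_ofPred_eq, mul_comm x]

variable {S}

theorem IsLocalization.map_colon_span_singleton {s : R} (hs : s ∈ S) (I : Ideal R) :
    (I.colon (span {s})).map (algebraMap R A) = I.map (algebraMap R A) := by
  refine le_antisymm (map_le_iff_le_comap.mpr fun x hx => ?_) (map_mono le_colon)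
  rw [mem_comap, IsLocalization.algebraMap_mem_map_algebraMap_iff S]
  exact ⟨s, hs, by rw [mul_comm]; exact mem_colon_span_singleton.mp hx⟩

theorem IsSPrimary.isPrimary_map {Q : Ideal R} (hQ : IsSPrimary (S : Set R) Q) :
    (Q.map (algebraMap R A)).IsPrimary := by
  obtain ⟨hdisj, w, hw, hQw⟩ := hQ
  refine isPrimary_iff.mpr ⟨(IsLocalization.map_algebraMap_ne_top_iff_disjoint S A Q).mpr
    hdisj.symm, fun {a b} hab => ?_⟩
  obtain ⟨⟨x, u⟩, rfl⟩ := IsLocalization.mk'_surjective S a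
  obtain ⟨⟨y, v⟩, rfl⟩ := IsLocalization.mk'_surjective S b
  rw [← IsLocalization.mk'_mul, IsLocalization.mk'_mem_map_algebraMap_iff] at hab
  obtain ⟨m, hm, hmxy⟩ := hab
  rcases hQw (m * x) y (by rwa [mul_assoc]) with hx | ⟨n, hy⟩
  · refine Or.inl ((IsLocalization.mk'_mem_map_algebraMap_iff S A Q x u).mpr ?_)
    exact ⟨w * m, mul_mem hw hm, by rwa [mul_assoc]⟩
  · refine Or.inr ⟨n, ?_⟩
    rw [← IsLocalization.mk'_pow, IsLocalization.mk'_mem_map_algebraMap_iff]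
    exact ⟨w ^ n, pow_mem hw n, by rwa [← mul_pow]⟩

theorem isFinInfOf_isPrimary_map_of_colon {I : Ideal R} {s : R} (hs : s ∈ S)
    (h : IsFinInfOf (IsSPrimary (S : Set R)) (I.colon (span {s}))) :
    IsFinInfOf IsPrimary (I.map (algebraMap R A)) := by
  obtain ⟨m, Q, hQ, hcol⟩ := h
  refine ⟨m, fun i => (Q i).map (algebraMap R A), fun i => (hQ i).isPrimary_map, ?_⟩
  rw [← IsLocalization.map_colon_span_singleton hs, hcol, IsLocalization.map_iInf S]

theorem isFinInfOf_isPrimary_colon_of_map {I : Ideal R} {t : R}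
    (hsat : {x : R | ∃ s ∈ S, x * s ∈ I} = (I.colon (span {t}) : Set R))
    (h : IsFinInfOf IsPrimary (I.map (algebraMap R A))) :
    IsFinInfOf IsPrimary (I.colon (span {t})) := by
  obtain ⟨m, Q, hQ, hmap⟩ := h
  refine ⟨m, fun i => (Q i).comap (algebraMap R A), fun i => (hQ i).comap _, ?_⟩
  rw [← comap_iInf, ← hmap]
  exact SetLike.coe_injective
    (hsat.symm.trans (IsLocalization.coe_comap_map_eq_saturation S I).symm)

end Localization

theorem stmt_12_general {R : Type*} [CommRing R] (S : Submonoid R)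
    (I : Ideal R) :
    ((∃ s ∈ S, ∃ (m : ℕ) (Q : Fin m → Ideal R),
        (∀ i, IsSPrimary (S : Set R) (Q i)) ∧ I.colon (Ideal.span {s}) = ⨅ i, Q i) ↔
      (∃ s' ∈ S, ∃ (m : ℕ) (Q : Fin m → Ideal R),
        (∀ i, (Q i).IsPrimary) ∧ I.colon (Ideal.span {s'}) = ⨅ i, Q i)) ∧
    ((∃ s ∈ S, ∃ (m : ℕ) (Q : Fin m → Ideal R),
        (∀ i, IsSPrimary (S : Set R) (Q i)) ∧ I.colon (Ideal.span {s}) = ⨅ i, Q i) ↔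
      ((∃ (m : ℕ) (Q : Fin m → Ideal (Localization S)),
          (∀ i, (Q i).IsPrimary) ∧ I.map (algebraMap R (Localization S)) = ⨅ i, Q i) ∧
        ∃ t ∈ S, {x : R | ∃ s ∈ S, x * s ∈ I} = (I.colon (Ideal.span {t}) : Set R))) := by
  have hAC : ∀ s ∈ S, IsFinInfOf (IsSPrimary (S : Set R)) (I.colon (span {s})) →
      IsFinInfOf IsPrimary (I.map (algebraMap R (Localization S))) ∧
        ∃ t ∈ S, {x : R | ∃ s ∈ S, x * s ∈ I} = (I.colon (span {t}) : Set R) := by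
    intro s hs h
    obtain ⟨t, ht⟩ := exists_isSaturationColon_of_colon hs h
    exact ⟨isFinInfOf_isPrimary_map_of_colon hs h, t, ht.1, ht.saturation_eq⟩
  refine ⟨⟨fun ⟨s, hs, h⟩ => ?_, fun ⟨s, hs, h⟩ => exists_isFinInfOf_isSPrimary_colon hs h⟩,
    fun ⟨s, hs, h⟩ => hAC s hs h, fun ⟨h, t, ht, hsat⟩ => ?_⟩
  · obtain ⟨hmap, t, ht, hsat⟩ := hAC s hs h
    exact ⟨t, ht, isFinInfOf_isPrimary_colon_of_map hsat hmap⟩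
  · exact exists_isFinInfOf_isSPrimary_colon ht (isFinInfOf_isPrimary_colon_of_map hsat h)

theorem stmt_12 {R : Type*} [CommRing R] (S : Submonoid R)
    (I : Ideal R) (hIS : Disjoint (I : Set R) (S : Set R)) :
    ((∃ s ∈ S, ∃ (m : ℕ) (Q : Fin m → Ideal R),
        (∀ i, IsSPrimary (S : Set R) (Q i)) ∧ I.colon (Ideal.span {s}) = ⨅ i, Q i) ↔
      (∃ s' ∈ S, ∃ (m : ℕ) (Q : Fin m → Ideal R),
        (∀ i, (Q i).IsPrimary) ∧ I.colon (Ideal.span {s'}) = ⨅ i, Q i)) ∧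
    ((∃ s ∈ S, ∃ (m : ℕ) (Q : Fin m → Ideal R),
        (∀ i, IsSPrimary (S : Set R) (Q i)) ∧ I.colon (Ideal.span {s}) = ⨅ i, Q i) ↔
      ((∃ (m : ℕ) (Q : Fin m → Ideal (Localization S)),
          (∀ i, (Q i).IsPrimary) ∧ I.map (algebraMap R (Localization S)) = ⨅ i, Q i) ∧
        ∃ t ∈ S, {x : R | ∃ s ∈ S, x * s ∈ I} = (I.colon (Ideal.span {t}) : Set R))) :=
  stmt_12_general S I
end

section
/- Let R be a commutative ring with identity, S a multiplicative subset of R, n a positive integer, and I an ideal of R with I ∩ S = ∅. Suppose R is S-Laskerian, i.e., every proper ideal of R disjoint from S can be written as an intersection of finitely many S-primary ideals of R. Then the extension I·R_S is an n-absorbing ideal of the localization R_S if and only if I is an S-n-absorbing ideal of R. -/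
/-- Key lemma: in an S-Laskerian ring, there is a single `s ∈ S` carrying the
saturation of `I` back into `I`. -/
lemma exists_sat_mul {R : Type*} [CommRing R] (S : Submonoid R)
    (I : Ideal R) (hIS : Disjoint (I : Set R) (S : Set R))
    (hLask : ∀ J : Ideal R, J ≠ ⊤ → Disjoint (J : Set R) (S : Set R) →
      ∃ (m : ℕ) (Q : Fin m → Ideal R),
        (∀ i, IsSPrimary (S : Set R) (Q i)) ∧ J = ⨅ i, Q i) :
    ∃ s ∈ S, ∀ a : R, (∃ u ∈ S, u * a ∈ I) → s * a ∈ I := by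
  have hItop : I ≠ ⊤ := by
    intro h
    exact Set.disjoint_left.1 hIS (h ▸ Submodule.mem_top : (1:R) ∈ I) S.one_mem
  obtain ⟨m, Q, hQ, hIQ⟩ := hLask I hItop hIS
  choose hdisj s hs hprim using hQ
  refine ⟨∏ i, s i, Submonoid.prod_mem S (fun i _ => hs i), fun a ⟨u, hu, hua⟩ => ?_⟩
  have key : ∀ i, s i * a ∈ Q i := by
    intro i
    have hmem : a * u ∈ Q i := by
      have : u * a ∈ ⨅ i, Q i := hIQ ▸ hua
      rw [mul_comm]
      exact Ideal.mem_iInf.1 this i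
    rcases hprim i a u hmem with h | h
    · exact h
    · exfalso
      obtain ⟨k, hk⟩ := h
      exact Set.disjoint_left.1 (hdisj i) hk
        (Submonoid.pow_mem S (S.mul_mem (hs i) hu) k)
  rw [hIQ, Ideal.mem_iInf]
  intro i
  have : (∏ j, s j) * a = (∏ j ∈ Finset.univ.erase i, s j) * (s i * a) := by
    rw [← mul_assoc, Finset.prod_erase_mul _ _ (Finset.mem_univ i)]
  rw [this]
  exact Ideal.mul_mem_left _ _ (key i)

theorem stmt_13 {R : Type*} [CommRing R] (S : Submonoid R) (n : ℕ) (hn : 0 < n)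
    (I : Ideal R) (hIS : Disjoint (I : Set R) (S : Set R))
    (hLask : ∀ J : Ideal R, J ≠ ⊤ → Disjoint (J : Set R) (S : Set R) →
      ∃ (m : ℕ) (Q : Fin m → Ideal R),
        (∀ i, IsSPrimary (S : Set R) (Q i)) ∧ J = ⨅ i, Q i) :
    IsNAbsorbing n (I.map (algebraMap R (Localization S))) ↔
      IsSNAbsorbing (S : Set R) n I := by
  set f := algebraMap R (Localization S) with hf
  constructor
  · intro habs
    obtain ⟨s, hsS, hsat⟩ := exists_sat_mul S I hIS hLask
    refine ⟨s, hsS, fun r hr => ?_⟩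
    have h1 : (∏ i, f (r i)) ∈ I.map f := by
      rw [← map_prod]
      exact Ideal.mem_map_of_mem f hr
    obtain ⟨j, hj⟩ := habs (fun i => f (r i)) h1
    rw [← map_prod] at hj
    obtain ⟨⟨x, t⟩, hxt⟩ := (IsLocalization.mem_map_algebraMap_iff S _).1 hj
    rw [← map_mul] at hxt
    obtain ⟨c, hc⟩ := (IsLocalization.eq_iff_exists S _).1 hxt
    refine ⟨j, hsat _ ⟨c * t, S.mul_mem c.2 t.2, ?_⟩⟩
    have : (c : R) * ((∏ i ∈ Finset.univ.erase j, r i) * t) = c * x := hc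
    rw [show (c : R) * t * ∏ i ∈ Finset.univ.erase j, r i
        = (c : R) * ((∏ i ∈ Finset.univ.erase j, r i) * t) by ring, this]
    exact Ideal.mul_mem_left _ _ x.2
  · rintro ⟨s, hsS, hs⟩
    intro r hr
    -- get numerators/denominators
    have hsurj : ∀ i, ∃ (ai : R) (ti : S), r i * f ti = f ai := fun i => by
      obtain ⟨⟨ai, ti⟩, h⟩ := IsLocalization.surj S (r i); exact ⟨ai, ti, h⟩
    choose a t ht using hsurj
    have hprod : (∏ i, r i) * f (∏ i, (t i : R)) = f (∏ i, a i) := by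
      rw [map_prod, map_prod, ← Finset.prod_mul_distrib]
      exact Finset.prod_congr rfl fun i _ => ht i
    have hmem : f (∏ i, a i) ∈ I.map f := by
      rw [← hprod]
      exact Ideal.mul_mem_right _ _ hr
    obtain ⟨⟨x, w⟩, hxw⟩ := (IsLocalization.mem_map_algebraMap_iff S _).1 hmem
    rw [← map_mul] at hxw
    obtain ⟨c, hc⟩ := (IsLocalization.eq_iff_exists S _).1 hxw
    -- u * ∏ a ∈ I with u = c*w ∈ S
    set u : R := (c : R) * w with hu
    have huS : u ∈ S := S.mul_mem c.2 w.2
    have huI : u * ∏ i, a i ∈ I := by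
      have : (c : R) * ((∏ i, a i) * w) = c * x := hc
      rw [show u * ∏ i, a i = (c : R) * ((∏ i, a i) * w) by rw [hu]; ring, this]
      exact Ideal.mul_mem_left _ _ x.2
    -- apply S-n-absorbing to modified family
    set a' : Fin (n + 1) → R := fun i => if i = 0 then u * a i else a i with ha'
    have ha'prod : (∏ i, a' i) = u * ∏ i, a i := by
      rw [← Finset.mul_prod_erase _ a' (Finset.mem_univ 0),
        ← Finset.mul_prod_erase _ a (Finset.mem_univ 0)]
      simp only [ha', if_pos rfl, mul_assoc]
      congr 1
      congr 1
      exact Finset.prod_congr rfl fun i hi => if_neg (Finset.ne_of_mem_erase hi)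
    obtain ⟨j, hj⟩ := hs a' (ha'prod ▸ huI)
    -- in both cases, s * u * ∏_{i ≠ j} a i ∈ I
    have hkey : s * u * ∏ i ∈ Finset.univ.erase j, a i ∈ I := by
      by_cases hj0 : j = 0
      · subst hj0
        have : (∏ i ∈ Finset.univ.erase (0 : Fin (n+1)), a' i)
            = ∏ i ∈ Finset.univ.erase 0, a i :=
          Finset.prod_congr rfl fun i hi => if_neg (Finset.ne_of_mem_erase hi)
        rw [this] at hj
        rw [show s * u * ∏ i ∈ Finset.univ.erase (0 : Fin (n+1)), a i
            = u * (s * ∏ i ∈ Finset.univ.erase (0 : Fin (n+1)), a i) by ring]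
        exact Ideal.mul_mem_left _ _ hj
      · have h0mem : (0 : Fin (n+1)) ∈ Finset.univ.erase j :=
          Finset.mem_erase.2 ⟨Ne.symm hj0, Finset.mem_univ _⟩
        have : (∏ i ∈ Finset.univ.erase j, a' i)
            = u * ∏ i ∈ Finset.univ.erase j, a i := by
          rw [← Finset.mul_prod_erase _ a' h0mem, ← Finset.mul_prod_erase _ a h0mem]
          simp only [ha', if_pos rfl, mul_assoc]
          congr 2
          exact Finset.prod_congr rfl fun i hi => if_neg (Finset.ne_of_mem_erase hi)
        rw [this] at hj
        rw [show s * u * ∏ i ∈ Finset.univ.erase j, a i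
            = s * (u * ∏ i ∈ Finset.univ.erase j, a i) by ring]
        exact hj
    refine ⟨j, ?_⟩
    -- show ∏_{i ≠ j} r i ∈ I.map f
    rw [IsLocalization.mem_map_algebraMap_iff S]
    refine ⟨⟨⟨s * u * ∏ i ∈ Finset.univ.erase j, a i, hkey⟩,
      ⟨s * u * ∏ i ∈ Finset.univ.erase j, (t i : R),
        S.mul_mem (S.mul_mem hsS huS)
          (Submonoid.prod_mem S (fun i _ => (t i).2))⟩⟩, ?_⟩
    show (∏ i ∈ Finset.univ.erase j, r i) * f (s * u * ∏ i ∈ Finset.univ.erase j, (t i : R))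
      = f (s * u * ∏ i ∈ Finset.univ.erase j, a i)
    have hp : (∏ i ∈ Finset.univ.erase j, r i) * f (∏ i ∈ Finset.univ.erase j, (t i : R))
        = f (∏ i ∈ Finset.univ.erase j, a i) := by
      rw [map_prod, map_prod, ← Finset.prod_mul_distrib]
      exact Finset.prod_congr rfl fun i _ => ht i
    rw [map_mul f (s * u) (∏ i ∈ Finset.univ.erase j, (t i : R)),
      map_mul f (s * u) (∏ i ∈ Finset.univ.erase j, a i), ← hp]
    ring
end

section
/- Let R_1 and R_2 be commutative rings with identity, S_1 and S_2 multiplicative subsets of R_1 and R_2 respectively, m and n positive integers, and for j = 1, 2 let I_j be an ideal of R_j with I_j ∩ S_j = ∅. If I_1 is an S_1-m-absorbing ideal of R_1 and I_2 is an S_2-n-absorbing ideal of R_2, then I_1 × I_2 is an (S_1 × S_2)-(m+n)-absorbing ideal of the product ring R_1 × R_2. -/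
/-!
Each ideal absorbs at the cost of a power of its element: if `I` is `S`-`n`-absorbing with
element `s` and `r_1 ⋯ r_k ∈ I`, then `s ^ k * ∏_{i ∈ A} r_i ∈ I` for some set `A` of at most
`n` indices. Applied in both coordinates to `m + n + 1` factors, this gives sets `A` and `B` of
at most `m` and `n` indices, so some index `j` lies in neither, and omitting `r_j` works with
the element `(s₁ ^ (m + n + 1), s₂ ^ (m + n + 1))`.
-/

open Finset

lemma Finset.exists_fin_embedding_map_univ_eq {ι : Type*} (B : Finset ι) {n : ℕ}
    (hB : B.card = n) : ∃ f : Fin n ↪ ι, univ.map f = B := by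
  refine ⟨(B.equivFinOfCardEq hB).symm.toEmbedding.trans (Function.Embedding.subtype _), ?_⟩
  rw [← map_map, map_univ_equiv, univ_eq_attach, attach_map_val]

lemma Ideal.mul_prod_mem_of_subset {R ι : Type*} [CommRing R] {I : Ideal R} {r : ι → R}
    {c : R} {A B : Finset ι} (hAB : A ⊆ B) (hA : c * ∏ i ∈ A, r i ∈ I) :
    c * ∏ i ∈ B, r i ∈ I := by
  classical
  rw [← prod_sdiff hAB, mul_left_comm]
  exact I.mul_mem_left _ hA

namespace IsSNAbsorbingAssoc

variable {R ι : Type*} [CommRing R] {s : R} {n : ℕ} {I : Ideal R}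

lemma exists_mem_mul_prod_erase_mem [DecidableEq ι] (h : IsSNAbsorbingAssoc s n I)
    {B : Finset ι} (hB : B.card = n + 1) {r : ι → R} (hr : ∏ i ∈ B, r i ∈ I) :
    ∃ j ∈ B, s * ∏ i ∈ B.erase j, r i ∈ I := by
  obtain ⟨f, rfl⟩ := B.exists_fin_embedding_map_univ_eq hB
  rw [prod_map] at hr
  obtain ⟨j, hj⟩ := h (r ∘ f) hr
  exact ⟨f j, mem_map_of_mem f (mem_univ j), by rwa [← map_erase, prod_map]⟩

/-- The coefficient `c` is folded into one of the factors before `h` is applied. -/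
lemma exists_subset_mul_mul_prod_mem (h : IsSNAbsorbingAssoc s n I) {B : Finset ι}
    (hB : B.card ≤ n + 1) {r : ι → R} {c : R} (hc : c * ∏ i ∈ B, r i ∈ I) :
    ∃ A ⊆ B, A.card ≤ n ∧ s * c * ∏ i ∈ A, r i ∈ I := by
  classical
  rcases hB.lt_or_eq with hB | hB
  · exact ⟨B, Subset.rfl, Nat.lt_succ_iff.mp hB, by rw [mul_assoc]; exact I.mul_mem_left s hc⟩
  obtain ⟨b, hb⟩ : B.Nonempty := card_pos.mp (by omega)
  set r' := Function.update r b (c * r b)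
  have hr'_of_ne : ∀ i ≠ b, r' i = r i := fun i hi => Function.update_of_ne hi _ _
  have hr'_prod : ∀ C : Finset ι, b ∈ C → ∏ i ∈ C, r' i = c * ∏ i ∈ C, r i := fun C hbC => by
    rw [prod_update_of_mem hbC, sdiff_singleton_eq_erase, ← mul_prod_erase C r hbC, mul_assoc]
  obtain ⟨j, hjB, hj⟩ := h.exists_mem_mul_prod_erase_mem hB (by rwa [hr'_prod B hb])
  refine ⟨B.erase j, erase_subset j B, by rw [card_erase_of_mem hjB, hB]; rfl, ?_⟩
  by_cases hjb : j = b
  · subst hjb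
    rw [prod_congr rfl fun i hi => hr'_of_ne i (ne_of_mem_erase hi)] at hj
    rw [mul_right_comm]
    exact I.mul_mem_right c hj
  · rwa [hr'_prod _ (mem_erase.mpr ⟨Ne.symm hjb, hb⟩), ← mul_assoc] at hj

lemma exists_subset_pow_mul_mul_prod_mem [DecidableEq ι] (h : IsSNAbsorbingAssoc s n I)
    (r : ι → R) (t : Finset ι) {c : R} (hc : c * ∏ i ∈ t, r i ∈ I) :
    ∃ A ⊆ t, A.card ≤ n ∧ s ^ t.card * c * ∏ i ∈ A, r i ∈ I := by
  induction t using Finset.induction_on generalizing c with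
  | empty => exact ⟨∅, Subset.rfl, Nat.zero_le n, by simpa using hc⟩
  | insert b t hbt ih =>
    rw [prod_insert hbt, ← mul_assoc] at hc
    obtain ⟨A, hAt, hAn, hA⟩ := ih hc
    have hbA : b ∉ A := fun hb => hbt (hAt hb)
    obtain ⟨A', hA'A, hA'n, hA'⟩ := h.exists_subset_mul_mul_prod_mem
      (B := insert b A) (r := r) (c := s ^ t.card * c) (by rw [card_insert_of_notMem hbA]; omega)
      (by rwa [prod_insert hbA, ← mul_assoc, mul_assoc _ c])
    refine ⟨A', hA'A.trans (insert_subset_insert b hAt), hA'n, ?_⟩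
    rwa [card_insert_of_notMem hbt, pow_succ', mul_assoc s]

end IsSNAbsorbingAssoc

theorem stmt_15_general {R₁ R₂ : Type*} [CommRing R₁] [CommRing R₂]
    (S₁ : Submonoid R₁) (S₂ : Submonoid R₂) (m n : ℕ)
    (I₁ : Ideal R₁) (I₂ : Ideal R₂)
    (hA₁ : IsSNAbsorbing (S₁ : Set R₁) m I₁)
    (hA₂ : IsSNAbsorbing (S₂ : Set R₂) n I₂) :
    IsSNAbsorbing ((S₁.prod S₂ : Submonoid (R₁ × R₂)) : Set (R₁ × R₂)) (m + n)
      (I₁.prod I₂) := by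
  obtain ⟨s₁, hs₁S, hs₁⟩ := hA₁
  obtain ⟨s₂, hs₂S, hs₂⟩ := hA₂
  refine ⟨(s₁ ^ (m + n + 1), s₂ ^ (m + n + 1)), ⟨pow_mem hs₁S _, pow_mem hs₂S _⟩, ?_⟩
  intro r hr
  rw [Ideal.mem_prod, Prod.fst_prod, Prod.snd_prod] at hr
  obtain ⟨A, -, hAm, hA⟩ := hs₁.exists_subset_pow_mul_mul_prod_mem (fun i => (r i).1) univ
    (c := 1) (by rw [one_mul]; exact hr.1)
  obtain ⟨B, -, hBn, hB⟩ := hs₂.exists_subset_pow_mul_mul_prod_mem (fun i => (r i).2) univ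
    (c := 1) (by rw [one_mul]; exact hr.2)
  obtain ⟨j, -, hj⟩ := exists_mem_notMem_of_card_lt_card (s := A ∪ B) (t := univ) <| by
    have := card_union_le A B
    rw [card_univ, Fintype.card_fin]
    omega
  rw [mem_union, not_or] at hj
  have hA_sub : A ⊆ univ.erase j := subset_erase.mpr ⟨subset_univ A, hj.1⟩
  have hB_sub : B ⊆ univ.erase j := subset_erase.mpr ⟨subset_univ B, hj.2⟩
  rw [card_univ, Fintype.card_fin, mul_one] at hA hB
  refine ⟨j, (Ideal.mem_prod I₁ I₂).mpr ⟨?_, ?_⟩⟩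
  · simpa only [Prod.fst_mul, Prod.fst_prod] using Ideal.mul_prod_mem_of_subset hA_sub hA
  · simpa only [Prod.snd_mul, Prod.snd_prod] using Ideal.mul_prod_mem_of_subset hB_sub hB

theorem stmt_15 {R₁ R₂ : Type*} [CommRing R₁] [CommRing R₂]
    (S₁ : Submonoid R₁) (S₂ : Submonoid R₂) (m n : ℕ) (hm : 0 < m) (hn : 0 < n)
    (I₁ : Ideal R₁) (I₂ : Ideal R₂)
    (hd₁ : Disjoint (I₁ : Set R₁) (S₁ : Set R₁))
    (hd₂ : Disjoint (I₂ : Set R₂) (S₂ : Set R₂))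
    (hA₁ : IsSNAbsorbing (S₁ : Set R₁) m I₁)
    (hA₂ : IsSNAbsorbing (S₂ : Set R₂) n I₂) :
    IsSNAbsorbing ((S₁.prod S₂ : Submonoid (R₁ × R₂)) : Set (R₁ × R₂)) (m + n)
      (I₁.prod I₂) :=
  stmt_15_general S₁ S₂ m n I₁ I₂ hA₁ hA₂
end

section
/- Let R be a commutative ring with identity, S a multiplicative subset of R with saturation S̄ = {x ∈ R | xy ∈ S for some y ∈ R}, n a positive integer, and I an ideal of R with I ∩ S = ∅ (equivalently, since I is an ideal, I ∩ S̄ = ∅). Then I is an S-n-absorbing ideal of R if and only if I is an S̄-n-absorbing ideal of R. -/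
theorem stmt_17 {R : Type*} [CommRing R] (S : Submonoid R) (n : ℕ) (hn : 0 < n)
    (I : Ideal R) (hIS : Disjoint (I : Set R) (S : Set R)) :
    IsSNAbsorbing (S : Set R) n I ↔
      IsSNAbsorbing {x : R | ∃ y : R, x * y ∈ S} n I := by
  constructor
  · rintro ⟨s, hs, h⟩
    exact ⟨s, ⟨1, by simpa using hs⟩, h⟩
  · rintro ⟨s, ⟨y, hsy⟩, h⟩
    refine ⟨s * y, hsy, fun r hr => ?_⟩
    obtain ⟨j, hj⟩ := h r hr
    exact ⟨j, by have := I.mul_mem_left y hj; rwa [show y * (s * ∏ i ∈ Finset.univ.erase j, r i) = s * y * ∏ i ∈ Finset.univ.erase j, r i from by ring] at this⟩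
end
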